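/- Let χ be a bicharacter on ℤ^I with values in 𝕜∖{0}, p ∈ I and i, j ∈ I∖{p} with i ≠ j. Then in 𝒰(χ), E^+_{i,m} F^+_{j,n} = F^+_{j,n} E^+_{i,m} for all m, n ∈ ℕ₀. -/

import Mathlib

/-- The quantum integer `[n]_q = 1 + q + ⋯ + q^{n-1}` for `n ∈ ℕ`. -/
def qNat {𝕜 : Type*} [Field 𝕜] (q : 𝕜) (n : ℕ) : 𝕜 :=
  ∑ i ∈ Finset.range n, q ^ i

/-- The quantum factorial `[n]_q! = [1]_q [2]_q ⋯ [n]_q`. -/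
def qFact {𝕜 : Type*} [Field 𝕜] (q : 𝕜) (n : ℕ) : 𝕜 :=
  ∏ i ∈ Finset.range n, qNat q (i + 1)

variable {𝕜 : Type*} [Field 𝕜] {I : Type*} [Fintype I] [DecidableEq I]

/-- The standard basis vector `ε_i` of `ℤ^I`. -/
def eps (i : I) : I → ℤ := Pi.single i 1

/-- `χ : ℤ^I × ℤ^I → 𝕜∖{0}` is a bicharacter. -/
def IsBichar (χ : (I → ℤ) → (I → ℤ) → 𝕜) : Prop :=
  (∀ a b c : I → ℤ, χ (a + b) c = χ a c * χ b c) ∧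
  (∀ c a b : I → ℤ, χ c (a + b) = χ c a * χ c b) ∧
  (∀ a b : I → ℤ, χ a b ≠ 0)

/-- The generators `K_i, K_i⁻¹, L_i, L_i⁻¹, E_i, F_i` of `𝒰(χ)`. -/
inductive UGen (I : Type*) where
  | K (i : I)
  | Kinv (i : I)
  | L (i : I)
  | Linv (i : I)
  | E (i : I)
  | F (i : I)

/-- The toral generators are `K_i, K_i⁻¹, L_i, L_i⁻¹`. -/
def UGen.IsToral {I : Type*} : UGen I → Prop
  | .K _ => True
  | .Kinv _ => True
  | .L _ => True
  | .Linv _ => True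
  | _ => False

variable (𝕜) in
/-- The defining relations of the Drinfel'd double `𝒰(χ)`:
all `K_i^{±1}, L_j^{±1}` commute pairwise; `K_iK_i⁻¹ = 1 = L_iL_i⁻¹`;
`K_iE_j = q_{ij}E_jK_i`, `L_iE_j = q_{ji}⁻¹E_jL_i`, `K_iF_j = q_{ij}⁻¹F_jK_i`,
`L_iF_j = q_{ji}F_jL_i`; `E_iF_j − F_jE_i = δ_{ij}(K_i − L_i)`. -/
inductive URel (χ : (I → ℤ) → (I → ℤ) → 𝕜) :
    FreeAlgebra 𝕜 (UGen I) → FreeAlgebra 𝕜 (UGen I) → Prop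
  | comm (x y : UGen I) (hx : x.IsToral) (hy : y.IsToral) :
      URel χ (FreeAlgebra.ι 𝕜 x * FreeAlgebra.ι 𝕜 y)
        (FreeAlgebra.ι 𝕜 y * FreeAlgebra.ι 𝕜 x)
  | KKinv (i : I) :
      URel χ (FreeAlgebra.ι 𝕜 (.K i) * FreeAlgebra.ι 𝕜 (.Kinv i)) 1
  | LLinv (i : I) :
      URel χ (FreeAlgebra.ι 𝕜 (.L i) * FreeAlgebra.ι 𝕜 (.Linv i)) 1
  | KE (i j : I) :
      URel χ (FreeAlgebra.ι 𝕜 (.K i) * FreeAlgebra.ι 𝕜 (.E j))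
        (χ (eps i) (eps j) • (FreeAlgebra.ι 𝕜 (.E j) * FreeAlgebra.ι 𝕜 (.K i)))
  | LE (i j : I) :
      URel χ (FreeAlgebra.ι 𝕜 (.L i) * FreeAlgebra.ι 𝕜 (.E j))
        ((χ (eps j) (eps i))⁻¹ • (FreeAlgebra.ι 𝕜 (.E j) * FreeAlgebra.ι 𝕜 (.L i)))
  | KF (i j : I) :
      URel χ (FreeAlgebra.ι 𝕜 (.K i) * FreeAlgebra.ι 𝕜 (.F j))
        ((χ (eps i) (eps j))⁻¹ • (FreeAlgebra.ι 𝕜 (.F j) * FreeAlgebra.ι 𝕜 (.K i)))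
  | LF (i j : I) :
      URel χ (FreeAlgebra.ι 𝕜 (.L i) * FreeAlgebra.ι 𝕜 (.F j))
        (χ (eps j) (eps i) • (FreeAlgebra.ι 𝕜 (.F j) * FreeAlgebra.ι 𝕜 (.L i)))
  | EF (i j : I) :
      URel χ (FreeAlgebra.ι 𝕜 (.E i) * FreeAlgebra.ι 𝕜 (.F j) -
          FreeAlgebra.ι 𝕜 (.F j) * FreeAlgebra.ι 𝕜 (.E i))
        (if i = j then FreeAlgebra.ι 𝕜 (.K i) - FreeAlgebra.ι 𝕜 (.L i) else 0)

/-- The Drinfel'd double `𝒰(χ)`, presented by generators and relations. -/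
abbrev UAlg (χ : (I → ℤ) → (I → ℤ) → 𝕜) : Type _ := RingQuot (URel 𝕜 χ)

variable (χ : (I → ℤ) → (I → ℤ) → 𝕜)

/-- The canonical projection from the free algebra onto `𝒰(χ)`. -/
noncomputable def mkU : FreeAlgebra 𝕜 (UGen I) →ₐ[𝕜] UAlg χ :=
  RingQuot.mkAlgHom 𝕜 (URel 𝕜 χ)

/-- The generator `K_i` of `𝒰(χ)`. -/
noncomputable def uK (i : I) : UAlg χ := mkU χ (FreeAlgebra.ι 𝕜 (.K i))
/-- The generator `K_i⁻¹` of `𝒰(χ)`. -/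
noncomputable def uKinv (i : I) : UAlg χ := mkU χ (FreeAlgebra.ι 𝕜 (.Kinv i))
/-- The generator `L_i` of `𝒰(χ)`. -/
noncomputable def uL (i : I) : UAlg χ := mkU χ (FreeAlgebra.ι 𝕜 (.L i))
/-- The generator `L_i⁻¹` of `𝒰(χ)`. -/
noncomputable def uLinv (i : I) : UAlg χ := mkU χ (FreeAlgebra.ι 𝕜 (.Linv i))
/-- The generator `E_i` of `𝒰(χ)`. -/
noncomputable def uE (i : I) : UAlg χ := mkU χ (FreeAlgebra.ι 𝕜 (.E i))
/-- The generator `F_i` of `𝒰(χ)`. -/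
noncomputable def uF (i : I) : UAlg χ := mkU χ (FreeAlgebra.ι 𝕜 (.F i))

/-- The general recursion `Y_0 = Y`, `Y_{m+1} = X Y_m − α β^m Y_m X`; with
`X = E_p`, `Y = E_i`, `α = q_{pi}`, `β = q_{pp}` this gives `E^+_{i,m}`, and
with `X = F_p`, `Y = F_j`, `α = q_{jp}`, `β = q_{pp}` it gives `F^+_{j,m}`. -/
def recE {A : Type*} [Ring A] [Algebra 𝕜 A] (α β : 𝕜) (X Y : A) : ℕ → A
  | 0 => Y
  | m + 1 => X * recE α β X Y m - (α * β ^ m) • (recE α β X Y m * X)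

/-! The only pair of generators involved that fails to commute is `E_p, F_p`. Moving `F_p` past
`E^+_{i,m+1}` produces a multiple of `E^+_{i,m} L_p`, and `L_p` commutes with `F^+_{j,n}` up to the
factor `q_{jp} q_{pp}^n` that defines `F^+_{j,n+1}` from `F^+_{j,n}`, so this defect cancels in
`[E^+_{i,m}, F^+_{j,n+1}]`. An induction on `n`, for all `m` at once, concludes. -/

section Recursion

variable {A : Type*} [Ring A] [Algebra 𝕜 A]

theorem recE_zero (α β : 𝕜) (X Y : A) : recE α β X Y 0 = Y := rfl

theorem recE_succ (α β : 𝕜) (X Y : A) (m : ℕ) :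
    recE α β X Y (m + 1) = X * recE α β X Y m - (α * β ^ m) • (recE α β X Y m * X) := rfl

theorem commute_recE {G X Y : A} (α β : 𝕜) (hX : Commute G X) (hY : Commute G Y) :
    ∀ m, Commute G (recE α β X Y m)
  | 0 => hY
  | m + 1 => by
    have ih := commute_recE α β hX hY m
    exact (hX.mul_right ih).sub_right ((ih.mul_right hX).smul_right _)

theorem mul_recE_of_mul_eq_smul {G X Y : A} {r s : 𝕜} (α β : 𝕜)
    (hX : G * X = r • (X * G)) (hY : G * Y = s • (Y * G)) :
    ∀ m, G * recE α β X Y m = (s * r ^ m) • (recE α β X Y m * G)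
  | 0 => by rw [recE_zero, pow_zero, mul_one, hY]
  | m + 1 => by
    have ih := mul_recE_of_mul_eq_smul α β hX hY m
    rw [recE_succ]
    linear_combination (norm := (simp only [mul_assoc, mul_sub, sub_mul, mul_smul_comm,
      smul_mul_assoc, smul_sub]; module))
      hX * recE α β X Y m + r • (X * ih) - (α * β ^ m) • (ih * X) -
        (α * β ^ m * s * r ^ m) • (recE α β X Y m * hX)

theorem lie_mul_sub_smul_mul {X Z F K L : A} {c d : 𝕜} (hXF : ⁅X, F⁆ = K - L)
    (hK : K * Z = c • (Z * K)) (hL : L * Z = d • (Z * L)) :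
    ⁅X * Z - c • (Z * X), F⁆ = X * ⁅Z, F⁆ - c • (⁅Z, F⁆ * X) + (c - d) • (Z * L) := by
  rw [Ring.lie_def] at hXF ⊢
  rw [Ring.lie_def]
  linear_combination (norm := (simp only [mul_assoc, mul_sub, sub_mul, mul_smul_comm,
    smul_mul_assoc, smul_sub]; module)) hXF * Z - c • (Z * hXF) + hK - hL

theorem mul_smul_mul_sub_smul_smul_mul_mul {X Z L : A} {c β : 𝕜} (t : 𝕜) (hβ : β ≠ 0)
    (hL : L * X = β⁻¹ • (X * L)) :
    X * (t • (Z * L)) - (c * β) • (t • (Z * L) * X) = t • ((X * Z - c • (Z * X)) * L) := by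
  have hXL : X * L = β • (L * X) := by rw [hL, smul_smul, mul_inv_cancel₀ hβ, one_smul]
  linear_combination (norm := (simp only [mul_assoc, sub_mul, mul_smul_comm,
    smul_mul_assoc, smul_sub]; module)) (c * t) • (Z * hXL)

theorem commute_mul_sub_smul_mul {E F W : A} {μ : 𝕜} (hEW : Commute E W)
    (hEF : ⁅E, F⁆ * W = μ • (W * ⁅E, F⁆)) : Commute E (F * W - μ • (W * F)) := by
  rw [Ring.lie_def] at hEF
  unfold Commute SemiconjBy
  linear_combination (norm := (simp only [mul_assoc, mul_sub, sub_mul, mul_smul_comm,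
    smul_mul_assoc, smul_sub]; module)) hEF + F * hEW.eq - μ • (hEW.eq * F)

end Recursion

section Relations

omit [Fintype I]

theorem mkU_eq_of_URel {x y : FreeAlgebra 𝕜 (UGen I)} (h : URel 𝕜 χ x y) :
    mkU χ x = mkU χ y :=
  RingQuot.mkAlgHom_rel 𝕜 h

theorem lie_uE_uF (a b : I) : ⁅uE χ a, uF χ b⁆ = if a = b then uK χ a - uL χ a else 0 := by
  have h := mkU_eq_of_URel χ (URel.EF a b)
  rwa [map_sub, map_mul, map_mul, apply_ite (mkU χ), map_sub, map_zero] at h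

theorem lie_uE_uF_self (a : I) : ⁅uE χ a, uF χ a⁆ = uK χ a - uL χ a := by
  rw [lie_uE_uF, if_pos rfl]

theorem commute_uE_uF {a b : I} (hab : a ≠ b) : Commute (uE χ a) (uF χ b) := by
  have h := lie_uE_uF χ a b
  rwa [if_neg hab, Ring.lie_def, sub_eq_zero] at h

theorem uK_mul_uE (a b : I) : uK χ a * uE χ b = χ (eps a) (eps b) • (uE χ b * uK χ a) := by
  have h := mkU_eq_of_URel χ (URel.KE (𝕜 := 𝕜) a b)
  rwa [map_mul, map_smul, map_mul] at h

theorem uL_mul_uE (a b : I) :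
    uL χ a * uE χ b = (χ (eps b) (eps a))⁻¹ • (uE χ b * uL χ a) := by
  have h := mkU_eq_of_URel χ (URel.LE (𝕜 := 𝕜) a b)
  rwa [map_mul, map_smul, map_mul] at h

theorem uL_mul_uF (a b : I) : uL χ a * uF χ b = χ (eps b) (eps a) • (uF χ b * uL χ a) := by
  have h := mkU_eq_of_URel χ (URel.LF (𝕜 := 𝕜) a b)
  rwa [map_mul, map_smul, map_mul] at h

end Relations

section Double

omit [Fintype I]

noncomputable def Eplus (p i : I) : ℕ → UAlg χ :=
  recE (χ (eps p) (eps i)) (χ (eps p) (eps p)) (uE χ p) (uE χ i)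

noncomputable def Fplus (p j : I) : ℕ → UAlg χ :=
  recE (χ (eps j) (eps p)) (χ (eps p) (eps p)) (uF χ p) (uF χ j)

theorem Eplus_zero (p i : I) : Eplus χ p i 0 = uE χ i := rfl

theorem Eplus_succ (p i : I) (m : ℕ) :
    Eplus χ p i (m + 1) = uE χ p * Eplus χ p i m -
      (χ (eps p) (eps i) * χ (eps p) (eps p) ^ m) • (Eplus χ p i m * uE χ p) := rfl

theorem Fplus_succ (p j : I) (n : ℕ) :
    Fplus χ p j (n + 1) = uF χ p * Fplus χ p j n -
      (χ (eps j) (eps p) * χ (eps p) (eps p) ^ n) • (Fplus χ p j n * uF χ p) := rfl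

variable (p : I)

theorem uK_mul_Eplus (i : I) (m : ℕ) :
    uK χ p * Eplus χ p i m =
      (χ (eps p) (eps i) * χ (eps p) (eps p) ^ m) • (Eplus χ p i m * uK χ p) :=
  mul_recE_of_mul_eq_smul _ _ (uK_mul_uE χ p p) (uK_mul_uE χ p i) m

theorem uL_mul_Eplus (i : I) (m : ℕ) :
    uL χ p * Eplus χ p i m =
      ((χ (eps i) (eps p))⁻¹ * (χ (eps p) (eps p))⁻¹ ^ m) • (Eplus χ p i m * uL χ p) :=
  mul_recE_of_mul_eq_smul _ _ (uL_mul_uE χ p p) (uL_mul_uE χ p i) m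

theorem uL_mul_Fplus (j : I) (n : ℕ) :
    uL χ p * Fplus χ p j n =
      (χ (eps j) (eps p) * χ (eps p) (eps p) ^ n) • (Fplus χ p j n * uL χ p) :=
  mul_recE_of_mul_eq_smul _ _ (uL_mul_uF χ p p) (uL_mul_uF χ p j) n

theorem lie_Eplus_succ_uF (i : I) (m : ℕ) :
    ⁅Eplus χ p i (m + 1), uF χ p⁆ =
      uE χ p * ⁅Eplus χ p i m, uF χ p⁆ -
        (χ (eps p) (eps i) * χ (eps p) (eps p) ^ m) • (⁅Eplus χ p i m, uF χ p⁆ * uE χ p) +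
        (χ (eps p) (eps i) * χ (eps p) (eps p) ^ m -
          (χ (eps i) (eps p))⁻¹ * (χ (eps p) (eps p))⁻¹ ^ m) • (Eplus χ p i m * uL χ p) :=
  lie_mul_sub_smul_mul (lie_uE_uF_self χ p) (uK_mul_Eplus χ p i m) (uL_mul_Eplus χ p i m)

theorem lie_Eplus_zero_uF {i : I} (hip : i ≠ p) : ⁅Eplus χ p i 0, uF χ p⁆ = 0 := by
  rw [Eplus_zero, Ring.lie_def, (commute_uE_uF χ hip).eq, sub_self]

theorem exists_lie_Eplus_succ_uF {i : I} (hpp : χ (eps p) (eps p) ≠ 0) (hip : i ≠ p) (m : ℕ) :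
    ∃ t : 𝕜, ⁅Eplus χ p i (m + 1), uF χ p⁆ = t • (Eplus χ p i m * uL χ p) := by
  induction m with
  | zero =>
    have h := lie_Eplus_succ_uF χ p i 0
    rw [lie_Eplus_zero_uF χ p hip, mul_zero, zero_mul, smul_zero, sub_zero, zero_add (_ • _)] at h
    exact ⟨_, h⟩
  | succ m ih =>
    obtain ⟨t, ht⟩ := ih
    have h := lie_Eplus_succ_uF χ p i (m + 1)
    rw [ht, pow_succ, ← mul_assoc,
      mul_smul_mul_sub_smul_smul_mul_mul t hpp (uL_mul_uE χ p p), ← Eplus_succ, ← add_smul] at h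
    exact ⟨_, h⟩

theorem commute_Eplus_Fplus {i j : I} (hpp : χ (eps p) (eps p) ≠ 0) (hip : i ≠ p) (hjp : j ≠ p)
    (hij : i ≠ j) (n : ℕ) : ∀ m, Commute (Eplus χ p i m) (Fplus χ p j n) := by
  induction n with
  | zero =>
    exact fun m ↦ (commute_recE _ _ (commute_uE_uF χ hjp.symm).symm
      (commute_uE_uF χ hij).symm m).symm
  | succ n ih =>
    intro m
    rw [Fplus_succ]
    refine commute_mul_sub_smul_mul (ih m) ?_
    cases m with
    | zero => rw [lie_Eplus_zero_uF χ p hip, zero_mul, mul_zero, smul_zero]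
    | succ m =>
      obtain ⟨t, ht⟩ := exists_lie_Eplus_succ_uF χ p hpp hip m
      rw [ht, smul_mul_assoc, mul_assoc, uL_mul_Fplus, mul_smul_comm, ← mul_assoc,
        (ih m).eq, mul_smul_comm, smul_comm, mul_assoc]

end Double

/-- Lemma (le:E+F+2): for `i, j ∈ I∖{p}` with `i ≠ j`, the elements
`E^+_{i,m}` and `F^+_{j,n}` of `𝒰(χ)` commute. -/
theorem Eplus_commute_Fplus (hχ : IsBichar χ) (p i j : I)
    (hip : i ≠ p) (hjp : j ≠ p) (hij : i ≠ j) (m n : ℕ) :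
    recE (χ (eps p) (eps i)) (χ (eps p) (eps p)) (uE χ p) (uE χ i) m *
        recE (χ (eps j) (eps p)) (χ (eps p) (eps p)) (uF χ p) (uF χ j) n =
      recE (χ (eps j) (eps p)) (χ (eps p) (eps p)) (uF χ p) (uF χ j) n *
        recE (χ (eps p) (eps i)) (χ (eps p) (eps p)) (uE χ p) (uE χ i) m :=
  (commute_Eplus_Fplus χ p (hχ.2.2 _ _) hip hjp hij n m).eq
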